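/- arXiv:2501.09471 — 2 statements merged into one kernel-verified Lean document; each statement's English description precedes it below -/
import Mathlib

section
/- For every constant specification CS for LPC⁺, the regularity rule JRE_≡ is not validity preserving in LPC⁺_CS: there exist formulas φ, ψ and a term t such that ⊨_{LPC⁺_CS} φ ≡ ψ but not ⊨_{LPC⁺_CS} [t]φ ≡ [t]ψ. In particular, for any atomic proposition p and justification variable x, ⊨_{LPC⁺_CS} p ≡ (p∧p) but not ⊨_{LPC⁺_CS} [x]p ≡ [x](p∧p). -/
namespace LPCplus

/-- Justification terms: constants, variables, application, sum, proof checker. -/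
inductive Tm : Type
  | const : ℕ → Tm
  | var   : ℕ → Tm
  | app   : Tm → Tm → Tm
  | sum   : Tm → Tm → Tm
  | bang  : Tm → Tm
  deriving DecidableEq

/-- Formulas of LPC⁺. -/
inductive Fm : Type
  | atom : ℕ → Fm
  | neg  : Fm → Fm
  | and  : Fm → Fm → Fm
  | imp  : Fm → Fm → Fm
  | cond : Fm → Fm → Fm   -- the counterfactual conditional `>`
  | box  : Tm → Fm → Fm   -- justification assertion `[t]φ`
  deriving DecidableEq

/-- A classical propositional tautology in the language of LPC⁺: true under every
boolean valuation of formulas that respects the classical connectives ¬, ∧, ⊃. -/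
def IsTaut (φ : Fm) : Prop :=
  ∀ v : Fm → Bool,
    (∀ ψ, v (Fm.neg ψ) = !(v ψ)) →
    (∀ ψ χ, v (Fm.and ψ χ) = (v ψ && v χ)) →
    (∀ ψ χ, v (Fm.imp ψ χ) = (!(v ψ) || v χ)) →
    v φ = true

/-- Axioms of LPC⁺. -/
inductive Ax : Fm → Prop
  | taut (φ : Fm) : IsTaut φ → Ax φ
  | a2 (φ ψ χ : Fm) : Ax ((φ.cond (ψ.imp χ)).imp ((φ.cond ψ).imp (φ.cond χ)))
  | a3 (φ : Fm) : Ax (φ.cond φ)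
  | a4 (φ ψ : Fm) : Ax ((φ.cond ψ).imp (φ.imp ψ))
  | a5 (s t : Tm) (φ ψ : Fm) :
      Ax (((Fm.box s (φ.cond ψ)).and (Fm.box t φ)).cond (Fm.box (s.app t) ψ))
  | a6 (s t : Tm) (φ : Fm) : Ax ((Fm.box s φ).cond (Fm.box (s.sum t) φ))
  | a7 (s t : Tm) (φ : Fm) : Ax ((Fm.box t φ).cond (Fm.box (s.sum t) φ))
  | a8 (t : Tm) (φ : Fm) : Ax ((Fm.box t φ).cond φ)
  | a9 (t : Tm) (φ : Fm) : Ax ((Fm.box t φ).cond (Fm.box t.bang (Fm.box t φ)))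

/-- A constant specification: a set of formulas `[c]φ` with `φ` an axiom instance. -/
def IsCS (CS : Set Fm) : Prop :=
  ∀ χ ∈ CS, ∃ (c : ℕ) (φ : Fm), χ = Fm.box (Tm.const c) φ ∧ Ax φ

/-- Derivability in LPC⁺_CS. -/
inductive Prv (CS : Set Fm) : Fm → Prop
  | ax  {φ} : Ax φ → Prv CS φ
  | cs  {φ} : φ ∈ CS → Prv CS φ
  | mp  {φ ψ} : Prv CS (φ.imp ψ) → Prv CS φ → Prv CS ψ
  | rcn (φ : Fm) {ψ} : Prv CS ψ → Prv CS (φ.cond ψ)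

/-- ⊥ := φ ∧ ¬φ (a fixed instance). -/
def botF : Fm := (Fm.atom 0).and (Fm.neg (Fm.atom 0))

/-- ⊤ := ¬⊥. -/
def topF : Fm := Fm.neg botF

/-- Conjunction ψ₁ ∧ ⋯ ∧ ψₙ of a list (⊤ for the empty list). -/
def listConj : List Fm → Fm
  | [] => topF
  | ψ :: l => l.foldl Fm.and ψ

/-- T ⊢_{LPC⁺_CS} φ iff ⊢_{LPC⁺_CS} (ψ₁ ∧ ⋯ ∧ ψₙ) ⊃ φ for some ψ₁,…,ψₙ ∈ T. -/
def Deriv (CS : Set Fm) (T : Set Fm) (φ : Fm) : Prop :=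
  ∃ l : List Fm, (∀ ψ ∈ l, ψ ∈ T) ∧ Prv CS ((listConj l).imp φ)

def Consis (CS : Set Fm) (T : Set Fm) : Prop := ¬ Deriv CS T botF

/-- Maximal LPC⁺_CS-consistent sets. -/
def MCS (CS : Set Fm) (Γ : Set Fm) : Prop :=
  Consis CS Γ ∧ ∀ Δ, Consis CS Δ → Γ ⊆ Δ → Δ = Γ

/-- A relational model. -/
structure Model where
  W : Type
  N : Set W
  Rf : Fm → W → W → Prop
  Rf_norm : ∀ φ w v, Rf φ w v → w ∈ N ∧ v ∈ N   -- R_φ is a relation on W_N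
  Rt : Tm → W → W → Prop
  Vn : W → Set ℕ     -- valuation at normal states (sets of atoms)
  Vf : W → Set Fm    -- valuation at non-normal states (sets of formulas)

/-- Truth at a state. -/
def Sat (M : Model) : Fm → M.W → Prop
  | .atom p, w => (w ∈ M.N ∧ p ∈ M.Vn w) ∨ (w ∉ M.N ∧ Fm.atom p ∈ M.Vf w)
  | .neg φ, w => (w ∈ M.N ∧ ¬ Sat M φ w) ∨ (w ∉ M.N ∧ Fm.neg φ ∈ M.Vf w)
  | .and φ ψ, w => (w ∈ M.N ∧ Sat M φ w ∧ Sat M ψ w) ∨ (w ∉ M.N ∧ Fm.and φ ψ ∈ M.Vf w)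
  | .imp φ ψ, w => (w ∈ M.N ∧ (Sat M φ w → Sat M ψ w)) ∨ (w ∉ M.N ∧ Fm.imp φ ψ ∈ M.Vf w)
  | .cond φ ψ, w =>
      (w ∈ M.N ∧ ∀ v, M.Rf φ w v → Sat M ψ v) ∨ (w ∉ M.N ∧ Fm.cond φ ψ ∈ M.Vf w)
  | .box t φ, w =>
      (w ∈ M.N ∧ ∀ v, M.Rt t w v → Sat M φ v) ∨ (w ∉ M.N ∧ Fm.box t φ ∈ M.Vf w)

/-- Conditions (C1)–(C7) making a relational model an LPC⁺_CS-model. -/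
def IsModel (CS : Set Fm) (M : Model) : Prop :=
  (∀ φ (w v : M.W), w ∈ M.N → M.Rf φ w v → Sat M φ v) ∧
  (∀ φ (w : M.W), w ∈ M.N → Sat M φ w → M.Rf φ w w) ∧
  (∀ (c : ℕ) φ, Fm.box (Tm.const c) φ ∈ CS →
      ∀ (w v : M.W), w ∈ M.N → M.Rt (Tm.const c) w v → Sat M φ v) ∧
  (∀ (s t : Tm) (w v : M.W), w ∈ M.N → M.Rt (s.sum t) w v → M.Rt s w v ∧ M.Rt t w v) ∧
  (∀ (s t : Tm) (w v : M.W), w ∈ M.N → M.Rt (s.app t) w v →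
      ∀ φ ψ, Sat M ((Fm.box s (φ.cond ψ)).and (Fm.box t φ)) w → Sat M ψ v) ∧
  (∀ (t : Tm) (w : M.W), w ∈ M.N → M.Rt t w w) ∧
  (∀ (t : Tm) (w v u : M.W), w ∈ M.N → M.Rt t.bang w v → M.Rt t v u → M.Rt t w u)

/-- LPC⁺_CS-validity. -/
def Valid (CS : Set Fm) (φ : Fm) : Prop :=
  ∀ M : Model, IsModel CS M → ∀ w ∈ M.N, Sat M φ w

/-- Local semantic consequence. -/
def Conseq (CS : Set Fm) (T : Set Fm) (φ : Fm) : Prop :=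
  ∀ M : Model, IsModel CS M → ∀ w ∈ M.N, (∀ ψ ∈ T, Sat M ψ w) → Sat M φ w

/-- Material equivalence φ ≡ ψ. -/
def eqv (φ ψ : Fm) : Fm := (φ.imp ψ).and (ψ.imp φ)

/-- Counterfactual biconditional φ ⇔ ψ. -/
def condEqv (φ ψ : Fm) : Fm := (φ.cond ψ).and (ψ.cond φ)

/-- Disjunction φ ∨ ψ := ¬(¬φ ∧ ¬ψ). -/
def orF (φ ψ : Fm) : Fm := Fm.neg ((Fm.neg φ).and (Fm.neg ψ))

/-- The canonical relational model for LPC⁺_CS. -/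
def canonical (CS : Set Fm) : Model where
  W := Set Fm
  N := {Γ | MCS CS Γ}
  Rf φ Γ Δ := MCS CS Γ ∧ MCS CS Δ ∧ {ψ | Fm.cond φ ψ ∈ Γ} ⊆ Δ
  Rf_norm := fun _ _ _ h => ⟨h.1, h.2.1⟩
  Rt t Γ Δ := {ψ | Fm.box t ψ ∈ Γ} ⊆ Δ
  Vn Γ := {p | Fm.atom p ∈ Γ}
  Vf Γ := Γ

end LPCplus

/-!
Validity constrains only normal states, whereas a non-normal state may satisfy an arbitrary set
of formulas; so a justification may reach a non-normal state where `p` holds but the equivalent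
`p ∧ p` does not. Take one normal state `true` and one non-normal state `false` satisfying every
formula except a chosen `χ`, with `false` reachable from `true` only along `R_x`. Truth at `true`
is then classical, with `φ > ψ` read as `φ ⊃ ψ` and `[t]φ` as `φ`, except that `[x]χ` fails; every
axiom holds there, so (C1)–(C7) hold for any constant specification.
-/

namespace LPCplus

section NormalState

variable {M : Model} {w : M.W} {φ ψ : Fm}

lemma sat_atom_iff (hw : w ∈ M.N) {p : ℕ} : Sat M (.atom p) w ↔ p ∈ M.Vn w := by
  simp [Sat, hw]

lemma sat_neg_iff (hw : w ∈ M.N) : Sat M (.neg φ) w ↔ ¬ Sat M φ w := by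
  simp [Sat, hw]

lemma sat_and_iff (hw : w ∈ M.N) : Sat M (.and φ ψ) w ↔ Sat M φ w ∧ Sat M ψ w := by
  simp [Sat, hw]

lemma sat_imp_iff (hw : w ∈ M.N) : Sat M (.imp φ ψ) w ↔ (Sat M φ w → Sat M ψ w) := by
  simp [Sat, hw]

lemma sat_cond_iff (hw : w ∈ M.N) : Sat M (.cond φ ψ) w ↔ ∀ v, M.Rf φ w v → Sat M ψ v := by
  simp [Sat, hw]

lemma sat_box_iff (hw : w ∈ M.N) {t : Tm} :
    Sat M (.box t φ) w ↔ ∀ v, M.Rt t w v → Sat M φ v := by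
  simp [Sat, hw]

end NormalState

end LPCplus

namespace LPCplus.Countermodel

def Holds (x : ℕ) (χ : Fm) : Fm → Prop
  | .atom _ => True
  | .neg φ => ¬ Holds x χ φ
  | .and φ ψ => Holds x χ φ ∧ Holds x χ ψ
  | .imp φ ψ => Holds x χ φ → Holds x χ ψ
  | .cond φ ψ => Holds x χ φ → Holds x χ ψ
  | .box t φ => Holds x χ φ ∧ (t = Tm.var x → φ ≠ χ)

def model (x : ℕ) (χ : Fm) : Model where
  W := Bool
  N := {true}
  Rf φ w v := w = true ∧ v = true ∧ Holds x χ φ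
  Rf_norm := fun _ _ _ h => ⟨h.1, h.2.1⟩
  Rt t w v := v = w ∨ (w = true ∧ v = false ∧ t = Tm.var x)
  Vn _ := Set.univ
  Vf _ := {χ}ᶜ

variable {x : ℕ} {χ : Fm}

lemma sat_false_iff (φ : Fm) : Sat (model x χ) φ false ↔ φ ≠ χ := by
  have hN : (false : (model x χ).W) ∉ (model x χ).N := Bool.false_ne_true
  cases φ <;> exact (or_iff_right (fun h => hN h.1)).trans (and_iff_right hN)

lemma sat_true_iff (φ : Fm) : Sat (model x χ) φ true ↔ Holds x χ φ := by
  have hN : (true : (model x χ).W) ∈ (model x χ).N := rfl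
  induction φ with
  | atom => exact iff_of_true ((sat_atom_iff hN).2 trivial) trivial
  | neg φ ih => exact (sat_neg_iff hN).trans (not_congr ih)
  | and φ ψ ih₁ ih₂ => exact (sat_and_iff hN).trans (and_congr ih₁ ih₂)
  | imp φ ψ ih₁ ih₂ => exact (sat_imp_iff hN).trans (imp_congr ih₁ ih₂)
  | cond φ ψ _ ih =>
    refine (sat_cond_iff hN).trans ⟨fun h hφ => ih.1 (h true ⟨rfl, rfl, hφ⟩), ?_⟩
    rintro h v ⟨-, rfl, hφ⟩
    exact ih.2 (h hφ)
  | box t φ ih =>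
    refine (sat_box_iff hN).trans ⟨fun h => ⟨ih.1 (h true (Or.inl rfl)), fun ht =>
      (sat_false_iff φ).1 (h false (Or.inr ⟨rfl, rfl, ht⟩))⟩, ?_⟩
    rintro ⟨hφ, hχ⟩ v (rfl | ⟨-, rfl, ht⟩)
    · exact ih.2 hφ
    · exact (sat_false_iff φ).2 (hχ ht)

lemma holds_of_isTaut {φ : Fm} (h : IsTaut φ) : Holds x χ φ := by
  classical
  refine of_decide_eq_true (h (fun ψ => decide (Holds x χ ψ)) ?_ ?_ ?_) <;> intros <;>
    rw [Bool.eq_iff_iff] <;>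
    simp only [decide_eq_true_iff, Bool.and_eq_true, Bool.or_eq_true, Bool.not_eq_true',
      decide_eq_false_iff_not] <;>
    simp only [Holds, imp_iff_not_or]

lemma holds_of_ax {φ : Fm} (h : Ax φ) : Holds x χ φ := by
  induction h with
  | taut φ hφ => exact holds_of_isTaut hφ
  | a2 => exact fun h₁ h₂ h₃ => h₁ h₃ (h₂ h₃)
  | a3 | a4 => exact id
  | a5 => exact fun ⟨⟨h₁, _⟩, h₂, _⟩ => ⟨h₁ h₂, by simp⟩
  | a6 | a7 => exact fun h => ⟨h.1, by simp⟩
  | a8 => exact And.left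
  | a9 => exact fun h => ⟨h, by simp⟩

lemma eq_of_rt {t : Tm} {w v : (model x χ).W} (h : (model x χ).Rt t w v) (ht : t ≠ Tm.var x) :
    v = w :=
  h.resolve_right fun h' => ht h'.2.2

lemma isModel_model {CS : Set Fm} (hCS : IsCS CS) : IsModel CS (model x χ) := by
  refine ⟨?C1, ?C2, ?C3, ?C4, ?C5, fun _ _ _ => Or.inl rfl, ?C7⟩
  case C1 =>
    rintro φ w v - ⟨-, rfl, hφ⟩
    exact (sat_true_iff φ).2 hφ
  case C2 =>
    intro φ w hw hφ
    obtain rfl : w = true := hw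
    exact ⟨rfl, rfl, (sat_true_iff φ).1 hφ⟩
  case C3 =>
    intro c φ hc w v hw hR
    obtain ⟨c', φ', heq, hax⟩ := hCS _ hc
    cases heq
    obtain rfl := eq_of_rt hR (by simp)
    obtain rfl : v = true := hw
    exact (sat_true_iff φ).2 (holds_of_ax hax)
  case C4 =>
    intro s t w v _ hR
    obtain rfl := eq_of_rt hR (by simp)
    exact ⟨Or.inl rfl, Or.inl rfl⟩
  case C5 =>
    intro s t w v hw hR φ ψ hsat
    obtain rfl := eq_of_rt hR (by simp)
    obtain rfl : v = true := hw
    obtain ⟨⟨hφψ, -⟩, hφ, -⟩ := (sat_true_iff _).1 hsat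
    exact (sat_true_iff ψ).2 (hφψ hφ)
  case C7 =>
    intro t w v u _ hwv hvu
    obtain rfl := eq_of_rt hwv (by simp)
    exact hvu

end LPCplus.Countermodel

namespace LPCplus

lemma valid_eqv_and_self (CS : Set Fm) (φ : Fm) : Valid CS (eqv φ (φ.and φ)) := by
  intro M _ w hw
  rw [eqv, sat_and_iff hw, sat_imp_iff hw, sat_imp_iff hw, sat_and_iff hw]
  exact ⟨fun h => ⟨h, h⟩, And.left⟩

open Countermodel in
lemma not_valid_eqv_box_var {CS : Set Fm} (hCS : IsCS CS) {x : ℕ} {φ ψ : Fm}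
    (hφ : Holds x ψ φ) (hne : φ ≠ ψ) :
    ¬ Valid CS (eqv (Fm.box (Tm.var x) φ) (Fm.box (Tm.var x) ψ)) := by
  intro hvalid
  have hN : (true : (model x ψ).W) ∈ (model x ψ).N := rfl
  have hxφ_imp_xψ := ((sat_and_iff hN).1 (hvalid _ (isModel_model hCS) true hN)).1
  have hxφ : Holds x ψ (Fm.box (Tm.var x) φ) := ⟨hφ, fun _ => hne⟩
  exact ((sat_true_iff _).1 ((sat_imp_iff hN).1 hxφ_imp_xψ ((sat_true_iff _).2 hxφ))).2 rfl rfl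

end LPCplus

open LPCplus in
/-- The regularity rule JRE_≡ is not validity preserving in LPC⁺_CS;
in particular this fails for φ = p, ψ = p∧p and t = x. -/
theorem stmt_3 (CS : Set Fm) (hCS : IsCS CS) :
    (∃ (φ ψ : Fm) (t : Tm),
        Valid CS (eqv φ ψ) ∧ ¬ Valid CS (eqv (Fm.box t φ) (Fm.box t ψ))) ∧
    (∀ (p x : ℕ),
        Valid CS (eqv (Fm.atom p) ((Fm.atom p).and (Fm.atom p))) ∧
        ¬ Valid CS (eqv (Fm.box (Tm.var x) (Fm.atom p))
            (Fm.box (Tm.var x) ((Fm.atom p).and (Fm.atom p))))) := by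
  have atom_counterexample : ∀ p x : ℕ,
      Valid CS (eqv (Fm.atom p) ((Fm.atom p).and (Fm.atom p))) ∧
      ¬ Valid CS (eqv (Fm.box (Tm.var x) (Fm.atom p))
          (Fm.box (Tm.var x) ((Fm.atom p).and (Fm.atom p)))) :=
    fun _ _ => ⟨valid_eqv_and_self CS _, not_valid_eqv_box_var hCS trivial (by simp)⟩
  exact ⟨⟨_, _, _, atom_counterexample 0 0⟩, atom_counterexample⟩
end

section
/- The canonical relational model for LPC⁺_CS is an LPC⁺_CS-model, i.e., it satisfies all seven model conditions (C1)–(C7). -/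
/-!
Truth lemma: in the canonical model a formula holds at a state iff it belongs to it. At
non-normal states this is the definition of the valuation; at maximal consistent sets it goes by
induction on the formula, the `>` case resting on a Lindenbaum extension of
`{χ | φ > χ ∈ Γ} ∪ {¬ψ}`, which is consistent when `φ > ψ ∉ Γ` by (RCN) and axiom
`(φ > (ψ ⊃ χ)) ⊃ ((φ > ψ) ⊃ (φ > χ))`. Through the truth lemma, each of (C1)–(C7) reduces to a
maximal consistent set containing an axiom instance (`φ > φ`, `(φ > ψ) ⊃ (φ ⊃ ψ)`, A5–A9) or a
member of `CS`.
-/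

namespace LPCplus

variable {CS T Γ : Set Fm} {φ ψ χ : Fm} {l : List Fm}

section Propositional

lemma Prv.of_isTaut (h : IsTaut φ) : Prv CS φ := .ax (.taut φ h)

lemma Prv.mp₂ (h : Prv CS (φ.imp (ψ.imp χ))) (h₁ : Prv CS φ) (h₂ : Prv CS ψ) : Prv CS χ :=
  .mp (.mp h h₁) h₂

lemma Prv.imp_self : Prv CS (φ.imp φ) :=
  .of_isTaut fun _ => by grind

lemma Prv.imp_intro (h : Prv CS φ) : Prv CS (ψ.imp φ) :=
  .mp (.of_isTaut fun _ => by grind) h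

lemma Prv.imp_trans (h₁ : Prv CS (φ.imp ψ)) (h₂ : Prv CS (ψ.imp χ)) : Prv CS (φ.imp χ) :=
  .mp₂ (.of_isTaut fun _ => by grind) h₁ h₂

lemma Prv.imp_mp (h₁ : Prv CS (χ.imp (φ.imp ψ))) (h₂ : Prv CS (χ.imp φ)) :
    Prv CS (χ.imp ψ) :=
  .mp₂ (.of_isTaut fun _ => by grind) h₁ h₂

lemma Prv.imp_and (h₁ : Prv CS (χ.imp φ)) (h₂ : Prv CS (χ.imp ψ)) :
    Prv CS (χ.imp (φ.and ψ)) :=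
  .mp₂ (.of_isTaut fun _ => by grind) h₁ h₂

lemma Prv.and_imp_left : Prv CS ((φ.and ψ).imp φ) :=
  .of_isTaut fun _ => by grind

lemma Prv.and_imp_right : Prv CS ((φ.and ψ).imp ψ) :=
  .of_isTaut fun _ => by grind

lemma Prv.and_intro : Prv CS (φ.imp (ψ.imp (φ.and ψ))) :=
  .of_isTaut fun _ => by grind

lemma Prv.top : Prv CS topF :=
  .of_isTaut fun _ => by grind [topF, botF]

end Propositional

section Conjunction

lemma prv_foldl_and_imp_of_mem :
    ∀ (l : List Fm) (b ψ : Fm), ψ ∈ b :: l → Prv CS ((l.foldl Fm.and b).imp ψ)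
  | [], _, _, h => List.mem_singleton.1 h ▸ .imp_self
  | c :: l, b, ψ, h => by
    have hbc : Prv CS ((l.foldl Fm.and (b.and c)).imp (b.and c)) :=
      prv_foldl_and_imp_of_mem l (b.and c) _ List.mem_cons_self
    simp only [List.mem_cons] at h
    rcases h with rfl | rfl | h
    · exact hbc.imp_trans .and_imp_left
    · exact hbc.imp_trans .and_imp_right
    · exact prv_foldl_and_imp_of_mem l _ _ (List.mem_cons_of_mem _ h)

lemma prv_listConj_imp_of_mem (h : ψ ∈ l) : Prv CS ((listConj l).imp ψ) := by
  cases l with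
  | nil => exact absurd h List.not_mem_nil
  | cons a l => exact prv_foldl_and_imp_of_mem l a ψ h

lemma foldl_and_mem {S : Set Fm} (hS : ∀ φ ∈ S, ∀ ψ ∈ S, φ.and ψ ∈ S) :
    ∀ (l : List Fm) (b : Fm), b ∈ S → (∀ ψ ∈ l, ψ ∈ S) → l.foldl Fm.and b ∈ S
  | [], _, hb, _ => hb
  | c :: l, b, hb, hl =>
    foldl_and_mem hS l _ (hS b hb c (hl c List.mem_cons_self))
      fun ψ hψ => hl ψ (List.mem_cons_of_mem _ hψ)

lemma listConj_mem {S : Set Fm} (hS : ∀ φ ∈ S, ∀ ψ ∈ S, φ.and ψ ∈ S) (htop : topF ∈ S)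
    (hl : ∀ ψ ∈ l, ψ ∈ S) : listConj l ∈ S := by
  cases l with
  | nil => exact htop
  | cons a l =>
    exact foldl_and_mem hS l a (hl a List.mem_cons_self)
      fun ψ hψ => hl ψ (List.mem_cons_of_mem _ hψ)

lemma prv_imp_listConj (hl : ∀ ψ ∈ l, Prv CS (χ.imp ψ)) : Prv CS (χ.imp (listConj l)) :=
  listConj_mem (S := {ψ | Prv CS (χ.imp ψ)}) (fun _ h₁ _ h₂ => h₁.imp_and h₂)
    Prv.top.imp_intro hl

end Conjunction

section Derivability

lemma Deriv.of_prv (h : Prv CS φ) : Deriv CS T φ :=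
  ⟨[], by simp, h.imp_intro⟩

lemma Deriv.of_mem (h : φ ∈ T) : Deriv CS T φ :=
  ⟨[φ], by simpa using h, .imp_self⟩

lemma Deriv.mp (h₁ : Deriv CS T (φ.imp ψ)) (h₂ : Deriv CS T φ) : Deriv CS T ψ := by
  obtain ⟨l₁, hl₁, hp₁⟩ := h₁
  obtain ⟨l₂, hl₂, hp₂⟩ := h₂
  have weaken : ∀ {l'}, l' ⊆ l₁ ++ l₂ → Prv CS ((listConj (l₁ ++ l₂)).imp (listConj l')) :=
    fun hsub => prv_imp_listConj fun _ hχ => prv_listConj_imp_of_mem (hsub hχ)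
  refine ⟨l₁ ++ l₂, fun χ hχ => (List.mem_append.1 hχ).elim (hl₁ χ) (hl₂ χ), ?_⟩
  exact ((weaken (List.subset_append_left _ _)).imp_trans hp₁).imp_mp
    ((weaken (List.subset_append_right _ _)).imp_trans hp₂)

lemma Deriv.deduction (h : Deriv CS (insert φ T) ψ) : Deriv CS T (φ.imp ψ) := by
  obtain ⟨l, hl, hp⟩ := h
  set l' := l.filter (· ≠ φ)
  refine ⟨l', fun χ hχ => ?_, ?_⟩
  · obtain ⟨hχl, hχφ⟩ := List.mem_filter.1 hχ
    exact (hl χ hχl).resolve_left (by simpa using hχφ)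
  · have hsplit : Prv CS (((listConj l').and φ).imp (listConj l)) := by
      refine prv_imp_listConj fun χ hχ => ?_
      by_cases hχφ : χ = φ
      · exact hχφ ▸ .and_imp_right
      · exact Prv.and_imp_left.imp_trans
          (prv_listConj_imp_of_mem (List.mem_filter.2 ⟨hχ, by simpa using hχφ⟩))
    exact .mp (.of_isTaut fun _ => by grind) (hsplit.imp_trans hp)

lemma Deriv.bot (h₁ : Deriv CS T φ) (h₂ : Deriv CS T φ.neg) : Deriv CS T botF :=
  ((Deriv.of_prv (.of_isTaut fun _ => by grind [botF])).mp h₁).mp h₂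

lemma deriv_neg_of_not_consis_insert (h : ¬ Consis CS (insert φ T)) : Deriv CS T φ.neg :=
  (Deriv.of_prv (.of_isTaut fun _ => by grind [botF])).mp (not_not.1 h).deduction

lemma consis_insert_neg (h : ¬ Deriv CS T φ) : Consis CS (insert φ.neg T) := fun hbot =>
  h ((Deriv.of_prv (.of_isTaut fun _ => by grind [botF])).mp hbot.deduction)

end Derivability

section Lindenbaum

lemma isOfFiniteCharacter_consis : Order.IsOfFiniteCharacter {T | Consis CS T} := by
  refine fun T => ⟨fun hT T' hT' _ ⟨l, hl, hp⟩ => hT ⟨l, fun ψ hψ => hT' (hl ψ hψ), hp⟩,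
    fun h ⟨l, hl, hp⟩ => ?_⟩
  exact h {ψ | ψ ∈ l} (fun ψ hψ => hl ψ hψ) l.finite_toSet ⟨l, fun _ => id, hp⟩

lemma exists_mcs_superset (h : Consis CS T) : ∃ Γ, T ⊆ Γ ∧ MCS CS Γ := by
  obtain ⟨Γ, hTΓ, hΓ⟩ := isOfFiniteCharacter_consis.exists_maximal (F := {T | Consis CS T}) h
  exact ⟨Γ, hTΓ, hΓ.1, fun Δ hΔ hΓΔ => (hΓ.2 hΔ hΓΔ).antisymm hΓΔ⟩

end Lindenbaum

namespace MCS

variable (hΓ : MCS CS Γ)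
include hΓ

lemma deriv_neg_of_not_mem (h : φ ∉ Γ) : Deriv CS Γ φ.neg :=
  deriv_neg_of_not_consis_insert fun hc =>
    h (hΓ.2 _ hc (Set.subset_insert _ _) ▸ Set.mem_insert φ Γ)

lemma mem_of_deriv (h : Deriv CS Γ φ) : φ ∈ Γ :=
  by_contra fun hφ => hΓ.1 (h.bot (hΓ.deriv_neg_of_not_mem hφ))

lemma mem_of_prv (h : Prv CS φ) : φ ∈ Γ :=
  hΓ.mem_of_deriv (.of_prv h)

lemma mem_of_prv_imp (h : Prv CS (φ.imp ψ)) (hφ : φ ∈ Γ) : ψ ∈ Γ :=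
  hΓ.mem_of_deriv ((Deriv.of_prv h).mp (.of_mem hφ))

lemma mem_of_cond_mem (h : φ.cond ψ ∈ Γ) (hφ : φ ∈ Γ) : ψ ∈ Γ :=
  hΓ.mem_of_deriv (((Deriv.of_prv (.ax (.a4 φ ψ))).mp (.of_mem h)).mp (.of_mem hφ))

lemma mem_of_prv_cond (h : Prv CS (φ.cond ψ)) (hφ : φ ∈ Γ) : ψ ∈ Γ :=
  hΓ.mem_of_cond_mem (hΓ.mem_of_prv h) hφ

lemma neg_mem_iff : φ.neg ∈ Γ ↔ φ ∉ Γ :=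
  ⟨fun hn hφ => hΓ.1 ((Deriv.of_mem hφ).bot (.of_mem hn)),
    fun hφ => hΓ.mem_of_deriv (hΓ.deriv_neg_of_not_mem hφ)⟩

lemma imp_mem_iff : φ.imp ψ ∈ Γ ↔ (φ ∈ Γ → ψ ∈ Γ) := by
  refine ⟨fun h hφ => hΓ.mem_of_deriv ((Deriv.of_mem h).mp (.of_mem hφ)), fun h => ?_⟩
  by_cases hφ : φ ∈ Γ
  · exact hΓ.mem_of_prv_imp (.of_isTaut fun _ => by grind) (h hφ)
  · exact hΓ.mem_of_prv_imp (.of_isTaut fun _ => by grind)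
      (hΓ.neg_mem_iff.2 hφ)

lemma and_mem_iff : φ.and ψ ∈ Γ ↔ φ ∈ Γ ∧ ψ ∈ Γ := by
  refine ⟨fun h => ⟨hΓ.mem_of_prv_imp .and_imp_left h, hΓ.mem_of_prv_imp .and_imp_right h⟩,
    fun ⟨hφ, hψ⟩ => ?_⟩
  exact hΓ.imp_mem_iff.1 (hΓ.mem_of_prv_imp .and_intro hφ) hψ

lemma cond_mem_of_deriv (h : Deriv CS {χ | φ.cond χ ∈ Γ} ψ) : φ.cond ψ ∈ Γ := by
  obtain ⟨l, hl, hp⟩ := h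
  have hK : ∀ {α β}, φ.cond (α.imp β) ∈ Γ → φ.cond α ∈ Γ → φ.cond β ∈ Γ :=
    fun h₁ h₂ => hΓ.imp_mem_iff.1 (hΓ.imp_mem_iff.1 (hΓ.mem_of_prv (.ax (.a2 _ _ _))) h₁) h₂
  have hconj : φ.cond (listConj l) ∈ Γ := by
    refine listConj_mem (S := {χ | φ.cond χ ∈ Γ}) (fun α hα β hβ => ?_)
      (hΓ.mem_of_prv (.rcn φ .top)) hl
    exact hK (hK (hΓ.mem_of_prv (.rcn φ .and_intro)) hα) hβ
  exact hK (hΓ.mem_of_prv (.rcn φ hp)) hconj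

lemma cond_mem_iff :
    φ.cond ψ ∈ Γ ↔ ∀ Δ, MCS CS Δ → {χ | φ.cond χ ∈ Γ} ⊆ Δ → ψ ∈ Δ := by
  refine ⟨fun h Δ _ hsub => hsub h, fun h => by_contra fun hψ => ?_⟩
  obtain ⟨Δ, hsub, hΔ⟩ := exists_mcs_superset
    (consis_insert_neg fun hd => hψ (hΓ.cond_mem_of_deriv hd))
  exact (hΔ.neg_mem_iff.1 (hsub (Set.mem_insert _ _)))
    (h Δ hΔ fun χ hχ => hsub (Set.mem_insert_of_mem _ hχ))

end MCS

section Semantics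

variable {M : Model} {w : M.W}

lemma sat_iff_mem_Vf (hw : w ∉ M.N) : Sat M φ w ↔ φ ∈ M.Vf w := by
  cases φ <;> simp [Sat, hw]

variable (hw : w ∈ M.N)
include hw

lemma sat_atom {p : ℕ} : Sat M (.atom p) w ↔ p ∈ M.Vn w := by simp [Sat, hw]
lemma sat_neg : Sat M φ.neg w ↔ ¬ Sat M φ w := by simp [Sat, hw]
lemma sat_and : Sat M (φ.and ψ) w ↔ Sat M φ w ∧ Sat M ψ w := by simp [Sat, hw]
lemma sat_imp : Sat M (φ.imp ψ) w ↔ (Sat M φ w → Sat M ψ w) := by simp [Sat, hw]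

lemma sat_cond : Sat M (φ.cond ψ) w ↔ ∀ v, M.Rf φ w v → Sat M ψ v := by
  simp [Sat, hw]

lemma sat_box {t : Tm} : Sat M (.box t φ) w ↔ ∀ v, M.Rt t w v → Sat M φ v := by
  simp [Sat, hw]

end Semantics

theorem sat_canonical_iff_mem : Sat (canonical CS) φ Γ ↔ φ ∈ Γ := by
  by_cases hΓ : Γ ∈ (canonical CS).N
  swap
  · exact sat_iff_mem_Vf hΓ
  induction φ generalizing Γ with
  | atom p => exact sat_atom hΓ
  | neg φ ih => rw [sat_neg hΓ, ih hΓ, MCS.neg_mem_iff hΓ]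
  | and φ ψ ihφ ihψ => rw [sat_and hΓ, ihφ hΓ, ihψ hΓ, MCS.and_mem_iff hΓ]
  | imp φ ψ ihφ ihψ => rw [sat_imp hΓ, ihφ hΓ, ihψ hΓ, MCS.imp_mem_iff hΓ]
  | cond φ ψ _ ih =>
    rw [sat_cond hΓ, MCS.cond_mem_iff hΓ]
    exact forall_congr' fun Δ => ⟨fun h hΔ hsub => (ih hΔ).1 (h ⟨hΓ, hΔ, hsub⟩),
      fun h ⟨_, hΔ, hsub⟩ => (ih hΔ).2 (h hΔ hsub)⟩
  | box t φ ih =>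
    have ih' (Δ : Set Fm) : Sat (canonical CS) φ Δ ↔ φ ∈ Δ := by
      by_cases hΔ : Δ ∈ (canonical CS).N
      exacts [ih hΔ, sat_iff_mem_Vf hΔ]
    rw [sat_box hΓ]
    exact ⟨fun h => (ih' _).1 (h {χ | Fm.box t χ ∈ Γ} subset_rfl),
      fun h Δ hΔ => (ih' Δ).2 (hΔ h)⟩

end LPCplus

open LPCplus in
theorem stmt_7_general (CS : Set Fm) :
    IsModel CS (canonical CS) := by
  refine ⟨?_, ?_, ?_, ?_, ?_, ?_, ?_⟩
  · rintro φ Γ Δ - ⟨hΓ, -, hsub⟩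
    exact sat_canonical_iff_mem.2 (hsub (hΓ.mem_of_prv (.ax (.a3 φ))))
  · intro φ Γ (hΓ : MCS CS Γ) hφ
    exact ⟨hΓ, hΓ, fun _ hψ => hΓ.mem_of_cond_mem hψ (sat_canonical_iff_mem.1 hφ)⟩
  · intro c φ hc Γ Δ (hΓ : MCS CS Γ) hR
    exact sat_canonical_iff_mem.2 (hR (hΓ.mem_of_prv (.cs hc)))
  · intro s t Γ Δ (hΓ : MCS CS Γ) hR
    exact ⟨fun ψ hψ => hR (hΓ.mem_of_prv_cond (.ax (.a6 s t ψ)) hψ),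
      fun ψ hψ => hR (hΓ.mem_of_prv_cond (.ax (.a7 s t ψ)) hψ)⟩
  · intro s t Γ Δ (hΓ : MCS CS Γ) hR φ ψ hφψ
    exact sat_canonical_iff_mem.2
      (hR (hΓ.mem_of_prv_cond (.ax (.a5 s t φ ψ)) (sat_canonical_iff_mem.1 hφψ)))
  · intro t Γ (hΓ : MCS CS Γ) ψ hψ
    exact hΓ.mem_of_prv_cond (.ax (.a8 t ψ)) hψ
  · intro t Γ Δ Θ (hΓ : MCS CS Γ) hR₁ hR₂ ψ hψ
    exact hR₂ (hR₁ (hΓ.mem_of_prv_cond (.ax (.a9 t ψ)) hψ))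

open LPCplus in
/-- The canonical relational model for LPC⁺_CS is an LPC⁺_CS-model,
i.e. it satisfies the model conditions (C1)–(C7). -/
theorem stmt_7 (CS : Set Fm) (hCS : IsCS CS) :
    IsModel CS (canonical CS) :=
  stmt_7_general CS
end
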